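/- Define, for Λ > 0, I₁(Λ) = \int_0^{Λ^{-1/4}} [ (arctan u - u/(1+u²)) / (u/Λ + (8π/3)(u - arctan u)) ] · (1/u²) \, du. Then liminf_{Λ → ∞} I₁(Λ)/\sqrt{Λ} ≥ \sqrt{24π}/24 and limsup_{Λ → ∞} I₁(Λ)/\sqrt{Λ} ≤ \sqrt{8π}/8. -/

import Mathlib

open Real Filter MeasureTheory

/-- Small-`u` part of the ground state energy decomposition:
`I₁(Λ) = ∫_0^{Λ^{-1/4}} (arctan u - u/(1+u²)) / (u/Λ + (8π/3)(u - arctan u)) · u^{-2} du`. -/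
noncomputable def I₁ (Λ : ℝ) : ℝ :=
  ∫ u in Set.Ioc (0 : ℝ) (Λ ^ (-(1 : ℝ) / 4)),
    (Real.arctan u - u / (1 + u ^ 2)) /
      (u / Λ + 8 * π / 3 * (u - Real.arctan u)) / u ^ 2

/-!
Near `0`, `arctan u - u / (1 + u²) = 2u³/3 + O(u⁵)` and `u - arctan u = u³/3 + O(u⁵)`. Hence on
`(0, R]`, `R = Λ^(-1/4)`, the integrand of `I₁ Λ` lies between `(1 + O(R²))`-multiples of the
Lorentzian `(2/3) (Λ⁻¹ + (8π/9) u²)⁻¹`, whose integral divided by `√Λ` is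
`(2/3) arctan (√(8π/9) Λ^(1/4)) / √(8π/9) → (2/3) (π/2) / √(8π/9) = √(8π)/8`.
So `I₁ Λ / √Λ` actually converges to `√(8π)/8`, and `√(24π)/24 ≤ √(8π)/8`.
-/

open Topology

lemma nonneg_of_hasDerivAt_of_nonneg {g g' : ℝ → ℝ} (hg : ∀ x, HasDerivAt g (g' x) x)
    (hg' : 0 ≤ g') (h0 : g 0 = 0) {x : ℝ} (hx : 0 ≤ x) : 0 ≤ g x :=
  h0 ▸ monotone_of_hasDerivAt_nonneg hg hg' hx

namespace Real

variable {x : ℝ}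

lemma sub_arctan_le (hx : 0 ≤ x) : x - arctan x ≤ x ^ 3 / 3 := by
  have h := nonneg_of_hasDerivAt_of_nonneg (g := fun x => arctan x - x + x ^ 3 / 3)
    (g' := fun x => x ^ 4 / (1 + x ^ 2)) (fun x => ?_) (fun x => by positivity) (by simp) hx
  · linarith
  refine (((hasDerivAt_arctan x).sub (hasDerivAt_id' x)).add
    ((hasDerivAt_pow 3 x).div_const 3)).congr_deriv ?_
  field_simp
  ring

lemma le_sub_arctan (hx : 0 ≤ x) : x ^ 3 / 3 - x ^ 5 / 5 ≤ x - arctan x := by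
  have h := nonneg_of_hasDerivAt_of_nonneg
    (g := fun x => x - x ^ 3 / 3 + x ^ 5 / 5 - arctan x)
    (g' := fun x => x ^ 6 / (1 + x ^ 2)) (fun x => ?_) (fun x => by positivity) (by simp) hx
  · linarith
  refine ((((hasDerivAt_id' x).sub ((hasDerivAt_pow 3 x).div_const 3)).add
    ((hasDerivAt_pow 5 x).div_const 5)).sub (hasDerivAt_arctan x)).congr_deriv ?_
  field_simp
  ring

lemma hasDerivAt_div_one_add_sq (x : ℝ) :
    HasDerivAt (fun x : ℝ => x / (1 + x ^ 2)) ((1 - x ^ 2) / (1 + x ^ 2) ^ 2) x := by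
  refine ((hasDerivAt_id' x).div ((hasDerivAt_pow 2 x).const_add 1)
    (by positivity)).congr_deriv ?_
  ring

lemma arctan_sub_div_le (hx : 0 ≤ x) : arctan x - x / (1 + x ^ 2) ≤ 2 * x ^ 3 / 3 := by
  have h := nonneg_of_hasDerivAt_of_nonneg
    (g := fun x => 2 * x ^ 3 / 3 + x / (1 + x ^ 2) - arctan x)
    (g' := fun x => 2 * x ^ 4 * (2 + x ^ 2) / (1 + x ^ 2) ^ 2) (fun x => ?_)
    (fun x => by positivity) (by simp) hx
  · linarith
  refine (((((hasDerivAt_pow 3 x).const_mul 2).div_const 3).add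
    (hasDerivAt_div_one_add_sq x)).sub (hasDerivAt_arctan x)).congr_deriv ?_
  field_simp
  ring

lemma le_arctan_sub_div (hx : 0 ≤ x) :
    2 * x ^ 3 / 3 - 4 * x ^ 5 / 5 ≤ arctan x - x / (1 + x ^ 2) := by
  have h := nonneg_of_hasDerivAt_of_nonneg
    (g := fun x => arctan x - x / (1 + x ^ 2) - 2 * x ^ 3 / 3 + 4 * x ^ 5 / 5)
    (g' := fun x => 2 * x ^ 6 * (3 + 2 * x ^ 2) / (1 + x ^ 2) ^ 2) (fun x => ?_)
    (fun x => by positivity) (by simp) hx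
  · linarith
  refine ((((hasDerivAt_arctan x).sub (hasDerivAt_div_one_add_sq x)).sub
    (((hasDerivAt_pow 3 x).const_mul 2).div_const 3)).add
    (((hasDerivAt_pow 5 x).const_mul 4).div_const 5)).congr_deriv ?_
  field_simp
  ring

end Real

lemma continuous_inv_add_mul_sq {c b : ℝ} (hc : 0 < c) (hb : 0 ≤ b) :
    Continuous fun u : ℝ => (c + b * u ^ 2)⁻¹ :=
  (continuous_const.add (continuous_const.mul (continuous_pow 2))).inv₀ fun u =>
    (add_pos_of_pos_of_nonneg hc (mul_nonneg hb (sq_nonneg u))).ne'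

lemma integral_inv_inv_add_mul_sq_div_sqrt {Λ b R : ℝ} (hΛ : 0 < Λ) (hb : 0 < b)
    (hR : 0 ≤ R) :
    (∫ u in Set.Ioc 0 R, (Λ⁻¹ + b * u ^ 2)⁻¹) / √Λ = arctan (√b * (R * √Λ)) / √b := by
  have hc : (√b * √Λ)⁻¹ ≠ 0 := by positivity
  have hpt (u : ℝ) : (Λ⁻¹ + b * u ^ 2)⁻¹ = b⁻¹ * (((√b * √Λ)⁻¹) ^ 2 + u ^ 2)⁻¹ := by
    rw [inv_pow, mul_pow, sq_sqrt hb.le, sq_sqrt hΛ.le]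
    field_simp
  simp_rw [← intervalIntegral.integral_of_le hR, hpt, intervalIntegral.integral_const_mul,
    integral_inv_sq_add_sq hc]
  have : √Λ ≠ 0 := by positivity
  have : √b ≠ 0 := by positivity
  simp only [div_inv_eq_mul, zero_mul, arctan_zero, sub_zero, inv_inv]
  field_simp
  rw [sq_sqrt hb.le]

lemma tendsto_arctan_sqrt_mul_div_sqrt {α : Type*} {l : Filter α} {b T : α → ℝ} {b₀ : ℝ}
    (hb : Tendsto b l (𝓝 b₀)) (hb₀ : 0 < b₀) (hT : Tendsto T l atTop) :
    Tendsto (fun x => arctan (√(b x) * T x) / √(b x)) l (𝓝 (π / 2 / √b₀)) := by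
  have hs : Tendsto (fun x => √(b x)) l (𝓝 √b₀) := hb.sqrt
  exact ((tendsto_arctan_atTop.mono_right nhdsWithin_le_nhds).comp
    (hs.pos_mul_atTop (by positivity) hT)).div hs (by positivity)

namespace I₁

noncomputable def integrand (Λ u : ℝ) : ℝ :=
  (arctan u - u / (1 + u ^ 2)) / (u / Λ + 8 * π / 3 * (u - arctan u)) / u ^ 2

variable {Λ R u : ℝ}

lemma integrand_le (hΛ : 0 < Λ) (hu : 0 < u) (huR : u ≤ R) (hR : R ≤ 1 / 2) :
    integrand Λ u ≤ 2 / 3 * (Λ⁻¹ + 8 * π / 9 * (1 - 3 / 5 * R ^ 2) * u ^ 2)⁻¹ := by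
  have hu2 : u ^ 2 ≤ R ^ 2 := pow_le_pow_left₀ hu.le huR 2
  have hR2 : R ^ 2 ≤ 1 / 4 := by nlinarith
  have hN := arctan_sub_div_le hu.le
  have hden : u * (Λ⁻¹ + 8 * π / 9 * (1 - 3 / 5 * R ^ 2) * u ^ 2) ≤
      u / Λ + 8 * π / 3 * (u - arctan u) := by
    have := le_sub_arctan hu.le
    have : u ^ 3 / 3 * (1 - 3 / 5 * R ^ 2) ≤ u - arctan u := by nlinarith [pow_pos hu 3]
    nlinarith [div_eq_mul_inv u Λ,
      mul_le_mul_of_nonneg_left this (by positivity : (0 : ℝ) ≤ 8 * π / 3)]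
  have hpos : 0 < u * (Λ⁻¹ + 8 * π / 9 * (1 - 3 / 5 * R ^ 2) * u ^ 2) := by
    have : 0 < 1 - 3 / 5 * R ^ 2 := by linarith
    positivity
  rw [integrand, div_div]
  calc _ ≤ 2 * u ^ 3 / 3 / (u * (Λ⁻¹ + 8 * π / 9 * (1 - 3 / 5 * R ^ 2) * u ^ 2) * u ^ 2) :=
        div_le_div₀ (by positivity) hN (mul_pos hpos (pow_pos hu 2))
          (mul_le_mul_of_nonneg_right hden (sq_nonneg u))
    _ = _ := by field_simp

lemma le_integrand (hΛ : 0 < Λ) (hu : 0 < u) (huR : u ≤ R) (hR : R ≤ 1 / 2) :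
    2 / 3 * (1 - 6 / 5 * R ^ 2) * (Λ⁻¹ + 8 * π / 9 * u ^ 2)⁻¹ ≤ integrand Λ u := by
  have hu2 : u ^ 2 ≤ R ^ 2 := pow_le_pow_left₀ hu.le huR 2
  have hR2 : R ^ 2 ≤ 1 / 4 := by nlinarith
  have hN₀ := le_arctan_sub_div hu.le
  have hN : 2 / 3 * (1 - 6 / 5 * R ^ 2) * u ^ 3 ≤ arctan u - u / (1 + u ^ 2) := by
    nlinarith [pow_pos hu 3]
  have hden : u / Λ + 8 * π / 3 * (u - arctan u) ≤ u * (Λ⁻¹ + 8 * π / 9 * u ^ 2) := by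
    have := sub_arctan_le hu.le
    nlinarith [div_eq_mul_inv u Λ,
      mul_le_mul_of_nonneg_left this (by positivity : (0 : ℝ) ≤ 8 * π / 3)]
  have hden₀ : 0 < u / Λ + 8 * π / 3 * (u - arctan u) := by
    have := le_sub_arctan hu.le
    have : 0 ≤ u - arctan u := by nlinarith [pow_pos hu 3]
    positivity
  rw [integrand, div_div]
  calc _ = 2 / 3 * (1 - 6 / 5 * R ^ 2) * u ^ 3 / (u * (Λ⁻¹ + 8 * π / 9 * u ^ 2) * u ^ 2) := by
        field_simp
    _ ≤ _ := div_le_div₀ (by nlinarith [pow_pos hu 3]) hN (mul_pos hden₀ (pow_pos hu 2))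
          (mul_le_mul_of_nonneg_right hden (sq_nonneg u))

lemma measurable_integrand (Λ : ℝ) : Measurable (integrand Λ) := by
  unfold integrand
  fun_prop

lemma integral_bounds (hΛ : 0 < Λ) (hR₀ : 0 ≤ R) (hR : R ≤ 1 / 2) :
    2 / 3 * (1 - 6 / 5 * R ^ 2) * ∫ u in Set.Ioc 0 R, (Λ⁻¹ + 8 * π / 9 * u ^ 2)⁻¹ ≤
      ∫ u in Set.Ioc 0 R, integrand Λ u ∧
    ∫ u in Set.Ioc 0 R, integrand Λ u ≤
      2 / 3 * ∫ u in Set.Ioc 0 R, (Λ⁻¹ + 8 * π / 9 * (1 - 3 / 5 * R ^ 2) * u ^ 2)⁻¹ := by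
  have hb : 0 ≤ 8 * π / 9 * (1 - 3 / 5 * R ^ 2) := mul_nonneg (by positivity) (by nlinarith)
  have hlow : IntegrableOn
      (fun u => 2 / 3 * (1 - 6 / 5 * R ^ 2) * (Λ⁻¹ + 8 * π / 9 * u ^ 2)⁻¹) (Set.Ioc 0 R) :=
    (continuous_const.mul
      (continuous_inv_add_mul_sq (inv_pos.2 hΛ) (by positivity))).integrableOn_Ioc
  have hupp : IntegrableOn
      (fun u => 2 / 3 * (Λ⁻¹ + 8 * π / 9 * (1 - 3 / 5 * R ^ 2) * u ^ 2)⁻¹) (Set.Ioc 0 R) :=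
    (continuous_const.mul (continuous_inv_add_mul_sq (inv_pos.2 hΛ) hb)).integrableOn_Ioc
  have hint : IntegrableOn (integrand Λ) (Set.Ioc 0 R) := by
    refine hupp.mono' (measurable_integrand Λ).aestronglyMeasurable
      ((ae_restrict_iff' measurableSet_Ioc).2 (.of_forall fun u hu => ?_))
    have h₀ := le_integrand hΛ hu.1 hu.2 hR
    have : 0 ≤ 1 - 6 / 5 * R ^ 2 := by nlinarith
    rw [norm_of_nonneg (le_trans (by positivity) h₀)]
    exact integrand_le hΛ hu.1 hu.2 hR
  rw [← integral_const_mul, ← integral_const_mul]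
  exact ⟨setIntegral_mono_on hlow hint measurableSet_Ioc fun _ hu => le_integrand hΛ hu.1 hu.2 hR,
    setIntegral_mono_on hint hupp measurableSet_Ioc fun _ hu => integrand_le hΛ hu.1 hu.2 hR⟩

lemma integral_div_sqrt_bounds (hΛ : 0 < Λ) (hR₀ : 0 ≤ R) (hR : R ≤ 1 / 2) :
    2 / 3 * (1 - 6 / 5 * R ^ 2) * (arctan (√(8 * π / 9) * (R * √Λ)) / √(8 * π / 9)) ≤
      (∫ u in Set.Ioc 0 R, integrand Λ u) / √Λ ∧
    (∫ u in Set.Ioc 0 R, integrand Λ u) / √Λ ≤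
      2 / 3 * (arctan (√(8 * π / 9 * (1 - 3 / 5 * R ^ 2)) * (R * √Λ)) /
        √(8 * π / 9 * (1 - 3 / 5 * R ^ 2))) := by
  have hb : 0 < 8 * π / 9 * (1 - 3 / 5 * R ^ 2) := mul_pos (by positivity) (by nlinarith)
  obtain ⟨hlow, hupp⟩ := integral_bounds hΛ hR₀ hR
  rw [← integral_inv_inv_add_mul_sq_div_sqrt hΛ (by positivity) hR₀,
    ← integral_inv_inv_add_mul_sq_div_sqrt hΛ hb hR₀, ← mul_div_assoc, ← mul_div_assoc]
  have hs : 0 < √Λ := sqrt_pos.2 hΛ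
  exact ⟨div_le_div_of_nonneg_right hlow hs.le, div_le_div_of_nonneg_right hupp hs.le⟩

end I₁

lemma tendsto_rpow_neg_one_div_four_mul_sqrt :
    Tendsto (fun Λ : ℝ => Λ ^ (-(1 : ℝ) / 4) * √Λ) atTop atTop := by
  refine (tendsto_rpow_atTop (y := 1 / 4) (by norm_num)).congr' ?_
  filter_upwards [eventually_gt_atTop 0] with Λ hΛ
  rw [sqrt_eq_rpow, ← rpow_add hΛ]
  norm_num

lemma two_div_three_mul_pi_div_two_div_sqrt : 2 / 3 * (π / 2 / √(8 * π / 9)) = √(8 * π) / 8 := by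
  have h9 : √(8 * π / 9) = √(8 * π) / 3 := by
    rw [sqrt_div' _ (by norm_num), show (9 : ℝ) = 3 ^ 2 by norm_num, sqrt_sq (by norm_num)]
  have : 0 < √(8 * π) := by positivity
  rw [h9]
  field_simp
  rw [sq_sqrt (by positivity)]

theorem tendsto_I₁_div_sqrt : Tendsto (fun Λ => I₁ Λ / √Λ) atTop (𝓝 (√(8 * π) / 8)) := by
  set R : ℝ → ℝ := fun Λ => Λ ^ (-(1 : ℝ) / 4)
  have hR : Tendsto R atTop (𝓝 0) := by
    have := tendsto_rpow_neg_atTop (y := 1 / 4) (by norm_num)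
    rwa [show -(1 / 4 : ℝ) = -1 / 4 by norm_num] at this
  have hR2 : Tendsto (fun Λ => R Λ ^ 2) atTop (𝓝 0) := by simpa using hR.pow 2
  have hT := tendsto_rpow_neg_one_div_four_mul_sqrt
  have hb₀ : (0 : ℝ) < 8 * π / 9 := by positivity
  have hlow : Tendsto (fun Λ => 2 / 3 * (1 - 6 / 5 * R Λ ^ 2) *
      (arctan (√(8 * π / 9) * (R Λ * √Λ)) / √(8 * π / 9))) atTop
      (𝓝 (2 / 3 * (π / 2 / √(8 * π / 9)))) := by
    have h := ((tendsto_const_nhds (x := (1 : ℝ))).sub (hR2.const_mul (6 / 5))).const_mul (2 / 3)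
      |>.mul (tendsto_arctan_sqrt_mul_div_sqrt tendsto_const_nhds hb₀ hT)
    rwa [mul_zero, sub_zero, mul_one] at h
  have hupp : Tendsto (fun Λ => 2 / 3 * (arctan (√(8 * π / 9 * (1 - 3 / 5 * R Λ ^ 2)) *
      (R Λ * √Λ)) / √(8 * π / 9 * (1 - 3 / 5 * R Λ ^ 2)))) atTop
      (𝓝 (2 / 3 * (π / 2 / √(8 * π / 9)))) := by
    refine (tendsto_arctan_sqrt_mul_div_sqrt ?_ hb₀ hT).const_mul (2 / 3)
    have h := ((tendsto_const_nhds (x := (1 : ℝ))).sub (hR2.const_mul (3 / 5))).const_mul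
      (8 * π / 9)
    rwa [mul_zero, sub_zero, mul_one] at h
  rw [← two_div_three_mul_pi_div_two_div_sqrt]
  have hbounds := (eventually_gt_atTop 0).and (hR.eventually (eventually_le_nhds one_half_pos))
  refine tendsto_of_tendsto_of_tendsto_of_le_of_le' hlow hupp ?_ ?_ <;>
    filter_upwards [hbounds] with Λ ⟨hΛ, hR⟩
  · exact (I₁.integral_div_sqrt_bounds hΛ (rpow_pos_of_pos hΛ _).le hR).1
  · exact (I₁.integral_div_sqrt_bounds hΛ (rpow_pos_of_pos hΛ _).le hR).2

theorem I1_liminf_limsup :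
    Real.sqrt (24 * π) / 24 ≤ liminf (fun Λ : ℝ => I₁ Λ / Real.sqrt Λ) atTop ∧
    limsup (fun Λ : ℝ => I₁ Λ / Real.sqrt Λ) atTop ≤ Real.sqrt (8 * π) / 8 := by
  rw [tendsto_I₁_div_sqrt.liminf_eq, tendsto_I₁_div_sqrt.limsup_eq]
  refine ⟨?_, le_rfl⟩
  rw [show 24 * π = 3 * (8 * π) by ring, sqrt_mul (by norm_num)]
  nlinarith [sq_sqrt (show (0 : ℝ) ≤ 3 by norm_num), sqrt_nonneg 3, sqrt_nonneg (8 * π)]
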